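/- arXiv:2206.00278 — 5 statements merged into one kernel-verified Lean document; each statement's English description precedes it below -/
import Mathlib

section
/- For every dimension d ≥ 1, every number of labels m ≥ 2, and every ε > 0, there exist sound certifiable classifiers F̂⁰, F̂¹ : ℝ^d → Y × Bool and points x, x' ∈ ℝ^d with ‖x' − x‖ ≤ ε such that the cascading ensemble Ĉ of (F̂⁰, F̂¹) satisfies Ĉᶜ(x) = true but Ĉᴸ(x') ≠ Ĉᴸ(x). In particular, the cascading ensembler is not soundness-preserving: soundness of all constituent classifiers does not imply soundness of the cascading ensemble. -/
/-- The input space ℝ^d with the Euclidean norm. -/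
abbrev Inp (d : ℕ) := EuclideanSpace ℝ (Fin d)

/-- A certifiable classifier `F : ℝ^d → Y × Bool` is sound if whenever its certificate
component is `true` at `x`, its label component is constant on the ε-ball around `x`. -/
def Sound {d m : ℕ} (ε : ℝ) (F : Inp d → Fin m × Bool) : Prop :=
  ∀ x x' : Inp d, (F x).2 = true → ‖x' - x‖ ≤ ε → (F x').1 = (F x).1

/-- The cascading ensemble: return the output of the constituent with the least index whose
certificate is `true`, defaulting to the last constituent if none is certified. -/
def cascade {d m N : ℕ} (hN : 0 < N) (F : Fin N → Inp d → Fin m × Bool) (x : Inp d) :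
    Fin m × Bool :=
  if h : (Finset.univ.filter fun j => (F j x).2 = true).Nonempty then
    F ((Finset.univ.filter fun j => (F j x).2 = true).min' h) x
  else
    F ⟨N - 1, Nat.sub_lt hN Nat.one_pos⟩ x

/-- `vote F w x j c`: total weight of constituents outputting `(j, c)` at `x`. -/
noncomputable def vote {d m N : ℕ} (F : Fin N → Inp d → Fin m × Bool) (w : Fin N → ℝ)
    (x : Inp d) (j : Fin m) (c : Bool) : ℝ :=
  ∑ i : Fin N, w i * (if F i x = (j, c) then 1 else 0)

/-- `voteTotal F w x j = v_x^w(j)`: total vote for label `j` regardless of certificate. -/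
noncomputable def voteTotal {d m N : ℕ} (F : Fin N → Inp d → Fin m × Bool) (w : Fin N → ℝ)
    (x : Inp d) (j : Fin m) : ℝ :=
  vote F w x j false + vote F w x j true

/-- `voteNC F w x = v_x^w(*, false)`: total vote carrying a `false` certificate. -/
noncomputable def voteNC {d m N : ℕ} (F : Fin N → Inp d → Fin m × Bool) (w : Fin N → ℝ)
    (x : Inp d) : ℝ :=
  ∑ j : Fin m, vote F w x j false

/-- The label of the weighted voting ensemble: the least `j` maximizing `v_x^w(j)`. -/
noncomputable def ensLabel {d m N : ℕ} (hm : 0 < m) (F : Fin N → Inp d → Fin m × Bool)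
    (w : Fin N → ℝ) (x : Inp d) : Fin m :=
  (Finset.univ.filter fun j => ∀ k, voteTotal F w x k ≤ voteTotal F w x j).min'
    (by
      obtain ⟨b, _, hb⟩ := Finset.exists_max_image (Finset.univ : Finset (Fin m))
        (voteTotal F w x) ⟨⟨0, hm⟩, Finset.mem_univ _⟩
      exact ⟨b, Finset.mem_filter.mpr ⟨Finset.mem_univ _, fun k => hb k (Finset.mem_univ _)⟩⟩)

open Classical in
/-- The certificate of the weighted voting ensemble. -/
noncomputable def ensCert {d m N : ℕ} (hm : 0 < m) (F : Fin N → Inp d → Fin m × Bool)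
    (w : Fin N → ℝ) (x : Inp d) : Bool :=
  if ∀ j : Fin m, j ≠ ensLabel hm F w x →
      voteNC F w x + vote F w x j true < vote F w x (ensLabel hm F w x) true
  then true else false

/-- The weighted voting ensemble. -/
noncomputable def ensemble {d m N : ℕ} (hm : 0 < m) (F : Fin N → Inp d → Fin m × Bool)
    (w : Fin N → ℝ) (x : Inp d) : Fin m × Bool :=
  (ensLabel hm F w x, ensCert hm F w x)

theorem cascading_not_soundness_preserving :
    ∀ (d m : ℕ), 1 ≤ d → 2 ≤ m → ∀ ε : ℝ, 0 < ε →
      ∃ F : Fin 2 → Inp d → Fin m × Bool,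
        (∀ i : Fin 2, Sound ε (F i)) ∧
        ∃ x x' : Inp d,
          ‖x' - x‖ ≤ ε ∧
          (cascade Nat.zero_lt_two F x).2 = true ∧
          (cascade Nat.zero_lt_two F x').1 ≠ (cascade Nat.zero_lt_two F x).1 ∧
          ¬ Sound ε (cascade Nat.zero_lt_two F) := by
  intro d m hd hm ε hε
  set F : Fin 2 → Inp d → Fin m × Bool :=
    ![fun x => (⟨0, by omega⟩, decide (x ⟨0, by omega⟩ ≤ 0)),
      fun x => (⟨1, by omega⟩, true)] with hF
  have hSound : ∀ i : Fin 2, Sound ε (F i) := by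
    intro i
    fin_cases i <;> intro x x' _ _ <;> simp [hF]
  refine ⟨F, hSound, 0, EuclideanSpace.single ⟨0, by omega⟩ ε, ?_⟩
  have hnorm : ‖(EuclideanSpace.single ⟨0, by omega⟩ ε : Inp d) - 0‖ = ε := by
    rw [sub_zero, EuclideanSpace.norm_single, Real.norm_eq_abs, abs_of_pos hε]
  have hx'0 : (EuclideanSpace.single (⟨0, by omega⟩ : Fin d) ε) ⟨0, by omega⟩ = ε := by
    simp [EuclideanSpace.single_apply]
  have hc0 : cascade Nat.zero_lt_two F 0 = (⟨0, by omega⟩, true) := by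
    have h1 : (F 0 (0 : Inp d)).2 = true := by simp [hF]
    have hmem : (0 : Fin 2) ∈ Finset.univ.filter fun j => (F j (0 : Inp d)).2 = true := by
      simp [h1]
    have hne : (Finset.univ.filter fun j => (F j (0 : Inp d)).2 = true).Nonempty := ⟨0, hmem⟩
    have hmin : (Finset.univ.filter fun j => (F j (0 : Inp d)).2 = true).min' hne = 0 :=
      le_antisymm (Finset.min'_le _ _ hmem) (Fin.zero_le _)
    rw [cascade, dif_pos hne, hmin]
    simp [hF]
  have hc1 : cascade Nat.zero_lt_two F (EuclideanSpace.single ⟨0, by omega⟩ ε)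
      = (⟨1, by omega⟩, true) := by
    set x' : Inp d := EuclideanSpace.single ⟨0, by omega⟩ ε
    have h0 : (F 0 x').2 = false := by
      simp [hF, x', hx'0, not_le.mpr hε]
    have hfilt : (Finset.univ.filter fun j => (F j x').2 = true) = {1} := by
      ext j
      fin_cases j <;> simp [h0, hF, hx'0, not_le.mpr hε]
    have hne : (Finset.univ.filter fun j => (F j x').2 = true).Nonempty := by
      rw [hfilt]; exact ⟨1, Finset.mem_singleton_self 1⟩
    rw [cascade, dif_pos hne]
    have : (Finset.univ.filter fun j => (F j x').2 = true).min' hne = 1 := by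
      simp [hfilt]
    rw [this]
    simp [hF]
  have hlabne : (cascade Nat.zero_lt_two F (EuclideanSpace.single ⟨0, by omega⟩ ε)).1
      ≠ (cascade Nat.zero_lt_two F (0 : Inp d)).1 := by
    rw [hc0, hc1]
    simp [Fin.ext_iff]
  exact ⟨hnorm.le, by rw [hc0], hlabne, fun hS => hlabne (hS 0 _ (by rw [hc0]) hnorm.le)⟩
end

section
/- Let F̂⁰,…,F̂^{N−1} be sound certifiable classifiers and let w ∈ [0,1]^N be any weight vector. Then the weighted voting ensemble Ê of F̂⁰,…,F̂^{N−1} with weights w is sound: for every x ∈ ℝ^d with Êᶜ(x) = true and every x' ∈ ℝ^d with ‖x' − x‖ ≤ ε, one has Êᴸ(x') = Êᴸ(x). In other words, the weighted voting ensembler is soundness-preserving. -/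
lemma voteTotal_eq {d m N : ℕ} (F : Fin N → Inp d → Fin m × Bool) (w : Fin N → ℝ)
    (x : Inp d) (j : Fin m) :
    voteTotal F w x j = ∑ i : Fin N, w i * (if (F i x).1 = j then 1 else 0) := by
  unfold voteTotal vote
  rw [← Finset.sum_add_distrib]
  refine Finset.sum_congr rfl fun i _ => ?_
  rw [← mul_add]
  congr 1
  rcases hF : F i x with ⟨a, b⟩
  by_cases h : a = j <;> cases b <;> simp [Prod.ext_iff, h]

lemma voteNC_eq {d m N : ℕ} (F : Fin N → Inp d → Fin m × Bool) (w : Fin N → ℝ)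
    (x : Inp d) :
    voteNC F w x = ∑ i : Fin N, w i * (if (F i x).2 = false then 1 else 0) := by
  unfold voteNC vote
  rw [Finset.sum_comm]
  refine Finset.sum_congr rfl fun i _ => ?_
  rw [← Finset.mul_sum]
  congr 1
  rcases hF : F i x with ⟨a, b⟩
  cases b <;> simp [Prod.ext_iff]

theorem voting_soundness_preserving (d m N : ℕ) (hd : 1 ≤ d) (hm : 2 ≤ m)
    (ε : ℝ) (hε : 0 < ε)
    (F : Fin N → Inp d → Fin m × Bool) (w : Fin N → ℝ)
    (hw : ∀ i, w i ∈ Set.Icc (0 : ℝ) 1)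
    (hsound : ∀ i, Sound ε (F i)) :
    Sound ε (ensemble (show 0 < m by omega) F w) := by
  have hm' : 0 < m := by omega
  intro x x' hc hdist
  set L := ensLabel hm' F w x with hL
  -- extract the certificate condition
  have hcert : ∀ j : Fin m, j ≠ L →
      voteNC F w x + vote F w x j true < vote F w x L true := by
    by_contra h
    simp only [ensemble, ensCert] at hc
    rw [if_neg] at hc
    · exact Bool.false_ne_true hc
    · exact h
  have hw0 : ∀ i, 0 ≤ w i := fun i => (hw i).1
  -- Lemma A
  have hA : vote F w x L true ≤ voteTotal F w x' L := by
    rw [voteTotal_eq]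
    unfold vote
    refine Finset.sum_le_sum fun i _ => ?_
    by_cases h : F i x = (L, true)
    · have h2 : (F i x).2 = true := by rw [h]
      have h1 : (F i x').1 = L := by
        rw [hsound i x x' h2 hdist, h]
      simp [h, h1]
    · have h3 : 0 ≤ w i * (if (F i x').1 = L then 1 else 0) :=
        mul_nonneg (hw0 i) (by split <;> norm_num)
      simpa [h] using h3
  -- Lemma B
  have hB : ∀ j : Fin m, voteTotal F w x' j ≤ voteNC F w x + vote F w x j true := by
    intro j
    rw [voteTotal_eq, voteNC_eq]
    unfold vote
    rw [← Finset.sum_add_distrib]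
    refine Finset.sum_le_sum fun i _ => ?_
    rcases hb : (F i x).2 with _ | _
    · split_ifs <;> first | simp_all | nlinarith [hw0 i]
    · have hlab : (F i x').1 = (F i x).1 := hsound i x x' hb hdist
      by_cases h : (F i x).1 = j
      · have hFx : F i x = (j, true) := Prod.ext h hb
        simp [hlab, h, hFx, hb]
      · have h' : ¬ (F i x').1 = j := by rw [hlab]; exact h
        have hFx : ¬ F i x = (j, true) := by
          intro hh; exact h (by rw [hh])
        simp [h', hFx, hb]
  -- strict comparison at x'
  have hstrict : ∀ j : Fin m, j ≠ L → voteTotal F w x' j < voteTotal F w x' L := by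
    intro j hj
    calc voteTotal F w x' j ≤ voteNC F w x + vote F w x j true := hB j
      _ < vote F w x L true := hcert j hj
      _ ≤ voteTotal F w x' L := hA
  -- conclude the label at x' is L
  have hset : (Finset.univ.filter fun j => ∀ k, voteTotal F w x' k ≤ voteTotal F w x' j)
      = {L} := by
    ext j
    simp only [Finset.mem_filter, Finset.mem_univ, true_and, Finset.mem_singleton]
    constructor
    · intro h
      by_contra hj
      exact absurd (h L) (not_le.mpr (hstrict j hj))
    · rintro rfl k
      by_cases hk : k = L
      · subst hk; exact le_refl _
      · exact (hstrict k hk).le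
  have hmem : ensLabel hm' F w x' ∈
      (Finset.univ.filter fun j => ∀ k, voteTotal F w x' k ≤ voteTotal F w x' j) :=
    Finset.min'_mem _ _
  rw [hset, Finset.mem_singleton] at hmem
  simpa [ensemble] using hmem
end

section
/- Let N be odd and let F̂⁰,…,F̂^{N−1} be sound certifiable classifiers. Let Ê : ℝ^d → Y × Bool be any function satisfying, for every x ∈ ℝ^d: (i) if c2(π,x) holds for some permutation π of {0,…,N−1}, then Ê(x) = F̂^{π_0}(x) for some permutation π with c2(π,x); (ii) if no permutation satisfies c2 at x but c1(π,x) holds for some permutation π, then Ê(x) = ((F̂^{π_0})ᴸ(x), false) for some permutation π with c1(π,x); (iii) otherwise the certificate component of Ê(x) is false. Then Ê is sound: for every x with Êᶜ(x) = true and every x' with ‖x' − x‖ ≤ ε, Êᴸ(x') = Êᴸ(x). That is, the permutation-based cascading ensembler is soundness-preserving. -/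
/-- Condition `c1(π, x)`. -/
def c1 {d m N : ℕ} (F : Fin N → Inp d → Fin m × Bool) (π : Equiv.Perm (Fin N))
    (x : Inp d) : Prop :=
  ∃ j : Fin N, (N + 1) / 2 ≤ (j : ℕ) ∧
    ∀ i : Fin N, i < j → (F (π i) x).1 = (F (π j) x).1

/-- Condition `c2(π, x)`. -/
def c2 {d m N : ℕ} (F : Fin N → Inp d → Fin m × Bool) (π : Equiv.Perm (Fin N))
    (x : Inp d) : Prop :=
  ∃ j : Fin N, (N + 1) / 2 ≤ (j : ℕ) ∧
    (∀ i : Fin N, i < j → F (π i) x = F (π j) x) ∧ (F (π j) x).2 = true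


open Classical in
/-- There is a permutation sending the initial segment of length `S.card` into `S`. -/
lemma exists_perm_initial {N : ℕ} (S : Finset (Fin N)) :
    ∃ π : Equiv.Perm (Fin N), ∀ i : Fin N, (i : ℕ) < S.card → π i ∈ S := by
  classical
  set c := S.card with hc
  have hcN : c ≤ N := by simpa using S.card_le_univ
  let p : Fin N → Prop := fun i => (i : ℕ) < c
  let q : Fin N → Prop := fun k => k ∈ S
  have e0 : {i : Fin N // p i} ≃ Fin c :=
    ⟨fun i => ⟨i.1, i.2⟩, fun k => ⟨⟨k, lt_of_lt_of_le k.2 hcN⟩, k.2⟩,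
      fun i => rfl, fun k => rfl⟩
  have hcard1 : Fintype.card {i : Fin N // p i} = c := by
    rw [Fintype.card_congr e0, Fintype.card_fin]
  have hcard2 : Fintype.card {k : Fin N // q k} = c := Fintype.card_coe S
  have e₁ : {i : Fin N // p i} ≃ {k : Fin N // q k} :=
    Fintype.equivOfCardEq (hcard1.trans hcard2.symm)
  have e₂ : {i : Fin N // ¬ p i} ≃ {k : Fin N // ¬ q k} :=
    Fintype.equivOfCardEq (by
      rw [Fintype.card_subtype_compl, Fintype.card_subtype_compl, hcard1, hcard2])
  refine ⟨((Equiv.sumCompl p).symm.trans (Equiv.sumCongr e₁ e₂)).trans (Equiv.sumCompl q),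
    fun i hi => ?_⟩
  have hstep : (Equiv.sumCompl p).symm i = Sum.inl ⟨i, hi⟩ := by
    rw [Equiv.symm_apply_eq, Equiv.sumCompl_apply_inl]
  simp only [Equiv.trans_apply, hstep, Equiv.sumCongr_apply, Sum.map_inl,
    Equiv.sumCompl_apply_inl]
  exact (e₁ ⟨i, hi⟩).2
/-- Two large finsets of `Fin N` intersect. -/
lemma finsets_intersect {N : ℕ} (A B : Finset (Fin N)) (h : N < A.card + B.card) :
    ∃ k, k ∈ A ∧ k ∈ B := by
  classical
  have h1 : (A ∪ B).card + (A ∩ B).card = A.card + B.card :=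
    Finset.card_union_add_card_inter A B
  have h2 : (A ∪ B).card ≤ N := by simpa using (A ∪ B).card_le_univ
  have : 0 < (A ∩ B).card := by omega
  obtain ⟨k, hk⟩ := Finset.card_pos.mp this
  exact ⟨k, (Finset.mem_inter.mp hk).1, (Finset.mem_inter.mp hk).2⟩

/-- If more than half the classifiers agree on a label, `c1` holds for some permutation. -/
lemma exists_c1_of_majority {d m N : ℕ} (F : Fin N → Inp d → Fin m × Bool) (x : Inp d)
    (ℓ : Fin m) (S : Finset (Fin N)) (hS : ∀ k ∈ S, (F k x).1 = ℓ)
    (hcard : (N + 1) / 2 + 1 ≤ S.card) : ∃ π : Equiv.Perm (Fin N), c1 F π x := by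
  obtain ⟨π, hπ⟩ := exists_perm_initial S
  have hcN : S.card ≤ N := by simpa using S.card_le_univ
  set j : Fin N := ⟨S.card - 1, by omega⟩ with hjdef
  have hjval : (j : ℕ) = S.card - 1 := rfl
  refine ⟨π, ⟨j, by omega, fun i hi => ?_⟩⟩
  have hij : (i : ℕ) < S.card - 1 := by
    have := hi
    rw [Fin.lt_def, hjval] at this
    exact this
  have h1 : (i : ℕ) < S.card := by omega
  have h2 : (j : ℕ) < S.card := by omega
  rw [hS _ (hπ i h1), hS _ (hπ j h2)]
theorem permutation_cascading_soundness_preserving (d m N : ℕ)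
    (hd : 1 ≤ d) (hm : 2 ≤ m) (hN : Odd N) (ε : ℝ) (hε : 0 < ε)
    (F : Fin N → Inp d → Fin m × Bool) (hsound : ∀ i, Sound ε (F i))
    (E : Inp d → Fin m × Bool)
    (h1 : ∀ x : Inp d, (∃ π : Equiv.Perm (Fin N), c2 F π x) →
      ∃ π : Equiv.Perm (Fin N), c2 F π x ∧ E x = F (π ⟨0, hN.pos⟩) x)
    (h2 : ∀ x : Inp d, ¬ (∃ π : Equiv.Perm (Fin N), c2 F π x) →
      (∃ π : Equiv.Perm (Fin N), c1 F π x) →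
      ∃ π : Equiv.Perm (Fin N), c1 F π x ∧ E x = ((F (π ⟨0, hN.pos⟩) x).1, false))
    (h3 : ∀ x : Inp d, ¬ (∃ π : Equiv.Perm (Fin N), c2 F π x) →
      ¬ (∃ π : Equiv.Perm (Fin N), c1 F π x) → (E x).2 = false) :
    Sound ε E := by
  intro x x' hcert hdist
  have hNodd : N % 2 = 1 := Nat.odd_iff.mp hN
  by_cases hc2 : ∃ π : Equiv.Perm (Fin N), c2 F π x
  case neg =>
    exfalso
    by_cases hc1 : ∃ π : Equiv.Perm (Fin N), c1 F π x
    · obtain ⟨π, _, hEx⟩ := h2 x hc2 hc1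
      rw [hEx] at hcert; simp at hcert
    · rw [h3 x hc2 hc1] at hcert; simp at hcert
  case pos =>
  obtain ⟨π, ⟨j, hj, hagree, hjc⟩, hEx⟩ := h1 x hc2
  have hsame : ∀ i : Fin N, (i : ℕ) ≤ (j : ℕ) → F (π i) x = F (π j) x := by
    intro i hi
    rcases lt_or_eq_of_le (show i ≤ j from hi) with h | h
    · exact hagree i h
    · rw [h]
  have hExj : E x = F (π j) x := by
    rw [hEx]; exact hsame ⟨0, hN.pos⟩ (Nat.zero_le _)
  classical
  set S' : Finset (Fin N) := Finset.univ.filter (fun k => (F k x').1 = (E x).1) with hS'def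
  have hmemS' : ∀ i : Fin N, (i : ℕ) ≤ (j : ℕ) → π i ∈ S' := by
    intro i hi
    have hcerti : (F (π i) x).2 = true := by rw [hsame i hi]; exact hjc
    have hlab := hsound (π i) x x' hcerti hdist
    rw [hS'def, Finset.mem_filter]
    refine ⟨Finset.mem_univ _, ?_⟩
    rw [hlab, hsame i hi, hExj]
  have hScard : (j : ℕ) + 1 ≤ S'.card := by
    have himg : (Finset.Iic j).image π ⊆ S' := by
      intro k hk
      obtain ⟨i, hi, rfl⟩ := Finset.mem_image.mp hk
      exact hmemS' i (Fin.le_def.mp (Finset.mem_Iic.mp hi))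
    calc (j : ℕ) + 1 = (Finset.Iic j).card := (Fin.card_Iic j).symm
      _ = ((Finset.Iic j).image π).card :=
          (Finset.card_image_of_injective _ π.injective).symm
      _ ≤ S'.card := Finset.card_le_card himg
  have hSprop : ∀ k ∈ S', (F k x').1 = (E x).1 := fun k hk => (Finset.mem_filter.mp hk).2
  have hScard' : (N + 1) / 2 + 1 ≤ S'.card := by omega
  have key : ∀ (ρ : Equiv.Perm (Fin N)) (j2 : Fin N), (N + 1) / 2 ≤ (j2 : ℕ) →
      (∀ i : Fin N, i < j2 → (F (ρ i) x').1 = (F (ρ j2) x').1) →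
      (F (ρ ⟨0, hN.pos⟩) x').1 = (E x).1 := by
    intro ρ j2 hj2 hag
    have hag' : ∀ i : Fin N, (i : ℕ) ≤ (j2 : ℕ) → (F (ρ i) x').1 = (F (ρ j2) x').1 := by
      intro i hi
      rcases lt_or_eq_of_le (show i ≤ j2 from hi) with h | h
      · exact hag i h
      · rw [h]
    have hBcard : (j2 : ℕ) + 1 = ((Finset.Iic j2).image ρ).card := by
      rw [Finset.card_image_of_injective _ ρ.injective, Fin.card_Iic]
    obtain ⟨k, hkS, hkB⟩ := finsets_intersect S' ((Finset.Iic j2).image ρ) (by omega)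
    obtain ⟨i2, hi2, rfl⟩ := Finset.mem_image.mp hkB
    have e1 : (F (ρ j2) x').1 = (E x).1 := by
      rw [← hag' i2 (Fin.le_def.mp (Finset.mem_Iic.mp hi2))]; exact hSprop _ hkS
    rw [hag' ⟨0, hN.pos⟩ (Nat.zero_le _), e1]
  by_cases hc2' : ∃ π : Equiv.Perm (Fin N), c2 F π x'
  · obtain ⟨ρ, ⟨j2, hj2, hag2, _⟩, hEx2⟩ := h1 x' hc2'
    rw [hEx2]
    exact key ρ j2 hj2 (fun i hi => by rw [hag2 i hi])
  · have hc1' := exists_c1_of_majority F x' (E x).1 S' hSprop hScard'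
    obtain ⟨ρ, ⟨j2, hj2, hag2⟩, hEx2⟩ := h2 x' hc2' hc1'
    rw [hEx2]
    exact key ρ j2 hj2 hag2
end

section
/- Let F̂⁰,…,F̂^{N−1} be sound certifiable classifiers and w ∈ [0,1]^N. For all x, x' ∈ ℝ^d with ‖x' − x‖ ≤ ε and every label j ∈ Y, the total vote for label j at x' is bounded by the non-certified vote at x plus the certified vote for j at x: v_{x'}^w(j) ≤ v_x^w(*, false) + v_x^w(j, true). -/
theorem vote_le_noncert_add_certified (d m N : ℕ) (hd : 1 ≤ d) (hm : 2 ≤ m)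
    (ε : ℝ) (hε : 0 < ε)
    (F : Fin N → Inp d → Fin m × Bool) (w : Fin N → ℝ)
    (hw : ∀ i, w i ∈ Set.Icc (0 : ℝ) 1)
    (hsound : ∀ i, Sound ε (F i))
    (x x' : Inp d) (hxx : ‖x' - x‖ ≤ ε) (j : Fin m) :
    voteTotal F w x' j ≤ voteNC F w x + vote F w x j true := by
  have key : ∀ i : Fin N,
      w i * (if F i x' = (j, false) then 1 else 0) + w i * (if F i x' = (j, true) then 1 else 0)
      ≤ (∑ k : Fin m, w i * (if F i x = (k, false) then 1 else 0))
        + w i * (if F i x = (j, true) then 1 else 0) := by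
    intro i
    have hw0 := (hw i).1
    have hw1 := (hw i).2
    have hnonneg : ∀ k : Fin m, 0 ≤ w i * (if F i x = (k, false) then 1 else 0) := by
      intro k; positivity
    have hsumnn : 0 ≤ ∑ k : Fin m, w i * (if F i x = (k, false) then 1 else 0) :=
      Finset.sum_nonneg fun k _ => hnonneg k
    have hT : (0:ℝ) ≤ w i * (if F i x = (j, true) then 1 else 0) := by positivity
    have hleft : w i * (if F i x' = (j, false) then 1 else 0)
        + w i * (if F i x' = (j, true) then 1 else 0) ≤ w i := by
      by_cases h1 : F i x' = (j, false)
      · have h2 : F i x' ≠ (j, true) := by rw [h1]; simp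
        rw [if_pos h1, if_neg h2]; linarith
      · rw [if_neg h1]
        by_cases h2 : F i x' = (j, true)
        · rw [if_pos h2]; linarith
        · rw [if_neg h2]; linarith
    by_cases hc : (F i x).2 = true
    · have hl := hsound i x x' hc hxx
      by_cases hjx : F i x = (j, true)
      · have : w i ≤ (∑ k : Fin m, w i * (if F i x = (k, false) then 1 else 0))
            + w i * (if F i x = (j, true) then 1 else 0) := by
          rw [if_pos hjx]; linarith
        linarith
      · have hne1 : (F i x).1 ≠ j := fun h => hjx (Prod.ext h hc)
        have hne : (F i x').1 ≠ j := by rw [hl]; exact hne1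
        have h1 : F i x' ≠ (j, false) := fun h => hne (by rw [h])
        have h2 : F i x' ≠ (j, true) := fun h => hne (by rw [h])
        rw [if_neg h1, if_neg h2]
        simp only [mul_zero, add_zero]
        linarith
    · have hfx : F i x = ((F i x).1, false) := by
        refine Prod.ext rfl ?_
        simpa using hc
      have hsingle : w i ≤ ∑ k : Fin m, w i * (if F i x = (k, false) then 1 else 0) := by
        have := Finset.single_le_sum (f := fun k => w i * (if F i x = (k, false) then 1 else 0))
          (fun k _ => hnonneg k) (Finset.mem_univ ((F i x).1))
        simpa [← hfx] using this
      linarith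
  have hL : voteTotal F w x' j = ∑ i : Fin N,
      (w i * (if F i x' = (j, false) then 1 else 0)
        + w i * (if F i x' = (j, true) then 1 else 0)) := by
    unfold voteTotal vote
    rw [Finset.sum_add_distrib]
  have hR : voteNC F w x + vote F w x j true = ∑ i : Fin N,
      ((∑ k : Fin m, w i * (if F i x = (k, false) then 1 else 0))
        + w i * (if F i x = (j, true) then 1 else 0)) := by
    unfold voteNC vote
    rw [Finset.sum_add_distrib, Finset.sum_comm]
  rw [hL, hR]
  exact Finset.sum_le_sum fun i _ => key i
end

section
/- Let N be odd and F̂⁰,…,F̂^{N−1} be certifiable classifiers. Fix x' ∈ ℝ^d and a label y ∈ Y, and suppose there is a permutation π and an index k with (N+1)/2 ≤ k ≤ N−1 such that (F̂^{π_i})ᴸ(x') = y for all i ≤ k (so at least (N+3)/2 of the classifiers assign label y at x'). Then for every permutation π' such that c1(π',x') holds, the label of the first classifier in π' agrees with y: (F̂^{π'_0})ᴸ(x') = y. -/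
theorem c1_first_label_agrees_with_majority (d m N : ℕ) (hd : 1 ≤ d) (hm : 2 ≤ m)
    (hN : Odd N)
    (F : Fin N → Inp d → Fin m × Bool) (x' : Inp d) (y : Fin m)
    (π : Equiv.Perm (Fin N)) (k : Fin N) (hk : (N + 1) / 2 ≤ (k : ℕ))
    (hy : ∀ i : Fin N, i ≤ k → (F (π i) x').1 = y) :
    ∀ π' : Equiv.Perm (Fin N), c1 F π' x' →
      (F (π' ⟨0, hN.pos⟩) x').1 = y := by

  rintro π' ⟨j, hj, hjlab⟩
  have hNpos : 0 < N := hN.pos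
  -- label at π' j
  set L := (F (π' j) x').1 with hL
  have hlab : ∀ i : Fin N, i ≤ j → (F (π' i) x').1 = L := by
    intro i hi
    rcases lt_or_eq_of_le hi with h | h
    · exact hjlab i h
    · rw [h]
  -- the two index sets
  have hfilter : ∀ t : Fin N,
      (Finset.univ.filter fun i => i ≤ t) = Finset.Iic t := by
    intro t; ext i; simp
  have hcard : ∀ (σ : Equiv.Perm (Fin N)) (t : Fin N),
      ((Finset.univ.filter fun i => i ≤ t).image σ).card = (t : ℕ) + 1 := by
    intro σ t
    rw [Finset.card_image_of_injective _ σ.injective, hfilter, Fin.card_Iic]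
  set A := (Finset.univ.filter fun i => i ≤ k).image π with hA
  set B := (Finset.univ.filter fun i => i ≤ j).image π' with hB
  have hAB : (A ∩ B).Nonempty := by
    by_contra hcon
    rw [Finset.not_nonempty_iff_eq_empty] at hcon
    have hdisj : Disjoint A B := Finset.disjoint_iff_inter_eq_empty.mpr hcon
    have hu : (A ∪ B).card = A.card + B.card := Finset.card_union_of_disjoint hdisj
    have hle : (A ∪ B).card ≤ N := by
      simpa using Finset.card_le_card (Finset.subset_univ (A ∪ B))
    rw [hu, hcard, hcard] at hle
    have h2 : (N + 1) / 2 + (N + 1) / 2 = N + 1 := by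
      obtain ⟨r, hr⟩ := hN; omega
    omega
  obtain ⟨a, ha⟩ := hAB
  rw [Finset.mem_inter] at ha
  obtain ⟨haA, haB⟩ := ha
  obtain ⟨i1, hi1, hi1a⟩ := Finset.mem_image.mp haA
  obtain ⟨i2, hi2, hi2a⟩ := Finset.mem_image.mp haB
  simp only [Finset.mem_filter, Finset.mem_univ, true_and] at hi1 hi2
  have hLy : L = y := by
    rw [← hlab i2 hi2, hi2a, ← hi1a, hy i1 hi1]
  have hj0 : (⟨0, hNpos⟩ : Fin N) ≤ j := by
    exact Fin.mk_le_of_le_val (Nat.zero_le _)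
  rw [hlab ⟨0, hNpos⟩ hj0, hLy]
end
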